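/- arXiv:1602.07844 — 10 statements merged into one kernel-verified Lean document; each statement's English description precedes it below -/
import Mathlib

section
/- (Lemma 1, non-accelerated solvers.) Let τ > 1, a, b, c ≥ 0, and let φ : (0,1) → ℝ be positive and strictly decreasing on (0,1). Let (κ_s)_{s≥1} be positive reals with κ_{s+1} ≤ τ·κ_s for all s, let (T_s)_{s≥1} satisfy T_{s+1} = τ·T_s, and let (ρ_s)_{s≥1} ⊆ (0,1) be defined by the non-accelerated iteration-count relation T_s = a·κ_s·φ(ρ_s) + b·φ(ρ_s) + c, where a·κ_s + b > 0 for all s. Then ρ_{s+1} ≤ ρ_s for all s ≥ 1; consequently, if ρ_1 ≤ 1/τ², then ρ_s ≤ 1/τ² for all s ≥ 1. -/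
open Set

/-- **Lemma 1 (non-accelerated solvers).** Let `τ > 1`, `a, b, c ≥ 0`, and `φ` positive
and strictly decreasing on `(0,1)`.  Let `κ_s > 0` with `κ_{s+1} ≤ τ κ_s`, let
`T_{s+1} = τ T_s`, and let `ρ_s ∈ (0,1)` be defined by the non-accelerated
iteration-count relation `T_s = a κ_s φ(ρ_s) + b φ(ρ_s) + c`, where `a κ_s + b > 0`.
Then `ρ_{s+1} ≤ ρ_s` for all `s`; consequently, if `ρ_1 ≤ 1/τ²` then `ρ_s ≤ 1/τ²`
for all `s`.  (Stages are indexed by `s : ℕ`, with `s = 0` being the first stage.) -/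
theorem cns_rho_decreasing_nonaccelerated
    (τ a b c : ℝ) (hτ : 1 < τ) (ha : 0 ≤ a) (hb : 0 ≤ b) (hc : 0 ≤ c)
    (φ : ℝ → ℝ) (hφpos : ∀ x ∈ Set.Ioo (0 : ℝ) 1, 0 < φ x)
    (hφanti : StrictAntiOn φ (Set.Ioo (0 : ℝ) 1))
    (κ T ρ : ℕ → ℝ)
    (hκpos : ∀ s, 0 < κ s) (hκ : ∀ s, κ (s + 1) ≤ τ * κ s)
    (hT : ∀ s, T (s + 1) = τ * T s)
    (hρ : ∀ s, ρ s ∈ Set.Ioo (0 : ℝ) 1)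
    (hTs : ∀ s, T s = a * κ s * φ (ρ s) + b * φ (ρ s) + c)
    (hpos : ∀ s, 0 < a * κ s + b) :
    (∀ s, ρ (s + 1) ≤ ρ s) ∧ (ρ 0 ≤ 1 / τ ^ 2 → ∀ s, ρ s ≤ 1 / τ ^ 2) := by
  have key : ∀ s, ρ (s + 1) ≤ ρ s := by
    intro s
    have hφs := hφpos _ (hρ s)
    have hφs1 := hφpos _ (hρ (s + 1))
    -- φ(ρ(s+1)) ≥ φ(ρ s)
    have hmono : φ (ρ s) ≤ φ (ρ (s + 1)) := by
      have h1 : T (s + 1) = (a * κ (s + 1) + b) * φ (ρ (s + 1)) + c := by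
        rw [hTs (s + 1)]; ring
      have h2 : τ * T s = τ * (a * κ s + b) * φ (ρ s) + τ * c := by
        rw [hTs s]; ring
      have hge : (a * κ (s + 1) + b) * φ (ρ s) + c ≤
          (a * κ (s + 1) + b) * φ (ρ (s + 1)) + c := by
        rw [← h1, hT s, h2]
        have hτκ : a * κ (s + 1) + b ≤ τ * (a * κ s + b) := by
          have := mul_le_mul_of_nonneg_left (hκ s) ha
          nlinarith
        nlinarith
      exact le_of_mul_le_mul_left (by linarith) (hpos (s + 1))
    by_contra h
    push_neg at h
    exact absurd (hφanti (hρ s) (hρ (s + 1)) h) (by linarith)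
  refine ⟨key, fun h0 s => ?_⟩
  induction s with
  | zero => exact h0
  | succ n ih => exact (key n).trans ih
end

section
/- (Lemma 1, accelerated solvers.) Let τ > 1, a, b, c ≥ 0, and let φ : (0,1) → ℝ be positive and strictly decreasing on (0,1). Let (κ_s)_{s≥1} be positive reals with κ_{s+1} ≤ τ·κ_s for all s, let (T_s)_{s≥1} satisfy T_{s+1} = √τ·T_s, and let (ρ_s)_{s≥1} ⊆ (0,1) be defined by the accelerated iteration-count relation T_s = a·√(κ_s)·φ(ρ_s) + b·φ(ρ_s) + c, where a·√(κ_s) + b > 0 for all s. Then ρ_{s+1} ≤ ρ_s for all s ≥ 1; consequently, if ρ_1 ≤ 1/τ², then ρ_s ≤ 1/τ² for all s ≥ 1. -/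
open Set

/-- **Lemma 1 (accelerated solvers).** Let `τ > 1`, `a, b, c ≥ 0`, and `φ` positive and
strictly decreasing on `(0,1)`.  Let `κ_s > 0` with `κ_{s+1} ≤ τ κ_s`, let
`T_{s+1} = √τ T_s`, and let `ρ_s ∈ (0,1)` be defined by the accelerated
iteration-count relation `T_s = a √(κ_s) φ(ρ_s) + b φ(ρ_s) + c`, where
`a √(κ_s) + b > 0`.  Then `ρ_{s+1} ≤ ρ_s` for all `s`; consequently, if `ρ_1 ≤ 1/τ²`
then `ρ_s ≤ 1/τ²` for all `s`.  (Stages indexed by `s : ℕ`, `s = 0` the first.) -/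
theorem cns_rho_decreasing_accelerated
    (τ a b c : ℝ) (hτ : 1 < τ) (ha : 0 ≤ a) (hb : 0 ≤ b) (hc : 0 ≤ c)
    (φ : ℝ → ℝ) (hφpos : ∀ x ∈ Set.Ioo (0 : ℝ) 1, 0 < φ x)
    (hφanti : StrictAntiOn φ (Set.Ioo (0 : ℝ) 1))
    (κ T ρ : ℕ → ℝ)
    (hκpos : ∀ s, 0 < κ s) (hκ : ∀ s, κ (s + 1) ≤ τ * κ s)
    (hT : ∀ s, T (s + 1) = Real.sqrt τ * T s)
    (hρ : ∀ s, ρ s ∈ Set.Ioo (0 : ℝ) 1)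
    (hTs : ∀ s, T s = a * Real.sqrt (κ s) * φ (ρ s) + b * φ (ρ s) + c)
    (hpos : ∀ s, 0 < a * Real.sqrt (κ s) + b) :
    (∀ s, ρ (s + 1) ≤ ρ s) ∧ (ρ 0 ≤ 1 / τ ^ 2 → ∀ s, ρ s ≤ 1 / τ ^ 2) := by
  have hτ0 : (0:ℝ) < τ := by linarith
  have hst : 1 < Real.sqrt τ := by
    rw [show (1:ℝ) = Real.sqrt 1 by simp]
    exact Real.sqrt_lt_sqrt (by norm_num) hτ
  have hmono : ∀ s, ρ (s + 1) ≤ ρ s := by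
    intro s
    by_contra h
    push_neg at h
    have hφlt : φ (ρ (s + 1)) < φ (ρ s) := hφanti (hρ s) (hρ (s + 1)) h
    have hφs : 0 < φ (ρ s) := hφpos _ (hρ s)
    have hks : Real.sqrt (κ (s + 1)) ≤ Real.sqrt τ * Real.sqrt (κ s) := by
      rw [← Real.sqrt_mul hτ0.le]
      exact Real.sqrt_le_sqrt (hκ s)
    have heq := hT s
    rw [hTs s, hTs (s + 1)] at heq
    nlinarith [hpos s, hpos (s + 1), hφpos _ (hρ (s + 1)),
      mul_lt_mul_of_pos_left hφlt (hpos (s + 1)),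
      mul_le_mul_of_nonneg_right hks (mul_nonneg ha hφs.le),
      mul_nonneg hb hφs.le, Real.sqrt_nonneg (κ s), Real.sqrt_nonneg (κ (s + 1))]
  refine ⟨hmono, fun h0 s => ?_⟩
  induction s with
  | zero => exact h0
  | succ n ih => exact (hmono n).trans ih
end

section
/- (Theorem 1, per-stage form.) Let τ > 1, γ_1 > 0, D_u ≥ 0, and for s = 1,…,S set γ_s = γ_1·τ^{1−s}. Let P : ℝ^d → ℝ have global minimizer x*, and for each s let P̃_s : ℝ^d → ℝ satisfy P̃_s(x) ≤ P(x) ≤ P̃_s(x) + γ_s·D_u for all x, with global minimizer x*_s. Let x̃_0, x̃_1, …, x̃_S ∈ ℝ^d and ρ_1,…,ρ_S ∈ (0, 1/τ²] satisfy P̃_s(x̃_s) − P̃_s(x*_s) ≤ ρ_s·(P̃_s(x̃_{s−1}) − P̃_s(x*_s)) for each s. Then P(x̃_S) − P(x*) ≤ (∏_{s=1}^S ρ_s)·(P(x̃_0) − P(x*)) + (1 + 1/τ²)·γ_1·D_u·τ^{2−S}/(τ − 1). -/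
open Finset

/-- **Theorem 1 (per-stage form).** Let `τ > 1`, `γ_1 > 0`, `D_u ≥ 0`, and for
`s = 1,…,S` set `γ_s = γ_1 τ^{1−s}`.  Let `P` have global minimizer `x*`, and for each
`s` let `P̃_s` satisfy `P̃_s(x) ≤ P(x) ≤ P̃_s(x) + γ_s D_u` with global minimizer `x*_s`.
If the iterates `x̃_s` and factors `ρ_s ∈ (0, 1/τ²]` satisfy
`P̃_s(x̃_s) − P̃_s(x*_s) ≤ ρ_s (P̃_s(x̃_{s−1}) − P̃_s(x*_s))` for each `s`, then
`P(x̃_S) − P(x*) ≤ (∏_{s=1}^S ρ_s)(P(x̃_0) − P(x*)) + (1 + 1/τ²) γ_1 D_u τ^{2−S}/(τ−1)`. -/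
theorem cns_strongly_convex_per_stage {d : ℕ}
    (τ γ1 Du : ℝ) (hτ : 1 < τ) (hγ1 : 0 < γ1) (hDu : 0 ≤ Du)
    (S : ℕ) (hS : 1 ≤ S)
    (P : (Fin d → ℝ) → ℝ) (xstar : Fin d → ℝ) (hxstar : ∀ y, P xstar ≤ P y)
    (Pt : ℕ → (Fin d → ℝ) → ℝ) (xs : ℕ → Fin d → ℝ)
    (hsand : ∀ s, 1 ≤ s → s ≤ S → ∀ x,
      Pt s x ≤ P x ∧ P x ≤ Pt s x + γ1 / τ ^ (s - 1) * Du)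
    (hmin : ∀ s, 1 ≤ s → s ≤ S → ∀ y, Pt s (xs s) ≤ Pt s y)
    (xt : ℕ → Fin d → ℝ) (ρ : ℕ → ℝ)
    (hρ : ∀ s, 1 ≤ s → s ≤ S → ρ s ∈ Set.Ioc 0 (1 / τ ^ 2))
    (hred : ∀ s, 1 ≤ s → s ≤ S →
      Pt s (xt s) - Pt s (xs s) ≤ ρ s * (Pt s (xt (s - 1)) - Pt s (xs s))) :
    P (xt S) - P xstar ≤
      (∏ s ∈ Finset.Icc 1 S, ρ s) * (P (xt 0) - P xstar) +
        (1 + 1 / τ ^ 2) * γ1 * Du * τ ^ ((2 : ℤ) - (S : ℤ)) / (τ - 1) := by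

  have hτ0 : (0:ℝ) < τ := lt_trans one_pos hτ
  have hτ1 : (0:ℝ) < τ - 1 := by linarith
  have key : ∀ n, n ≤ S → P (xt n) - P xstar ≤
      (∏ s ∈ Finset.Icc 1 n, ρ s) * (P (xt 0) - P xstar) +
      (1 + 1 / τ ^ 2) * γ1 * Du * τ ^ ((2:ℤ) - (n:ℤ)) / (τ - 1) := by
    intro n
    induction n with
    | zero =>
      intro _
      have h0 : (0:ℝ) ≤ (1 + 1 / τ ^ 2) * γ1 * Du * τ ^ ((2:ℤ) - ((0:ℕ):ℤ)) / (τ - 1) := by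
        positivity
      simpa using h0
    | succ n ih =>
      intro hn
      have hn' : n ≤ S := Nat.le_of_succ_le hn
      have ih' := ih hn'
      have h1 : 1 ≤ n + 1 := Nat.succ_le_succ (Nat.zero_le n)
      obtain ⟨hρ0, hρ1⟩ := hρ (n+1) h1 hn
      have hsand' := hsand (n+1) h1 hn
      have hmin' := hmin (n+1) h1 hn
      have hred' := hred (n+1) h1 hn
      simp only [Nat.add_sub_cancel] at hsand' hred'
      have hp0 : (0:ℝ) < τ ^ n := by positivity
      have hA : P (xt (n+1)) ≤ Pt (n+1) (xt (n+1)) + γ1 / τ ^ n * Du := (hsand' _).2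
      have hB : Pt (n+1) (xs (n+1)) ≤ P xstar :=
        le_trans (hmin' xstar) (hsand' xstar).1
      have hCn : Pt (n+1) (xt n) ≤ P (xt n) := (hsand' _).1
      have hD : P xstar - γ1 / τ ^ n * Du ≤ Pt (n+1) (xs (n+1)) := by
        have h2 := (hsand' (xs (n+1))).2
        have h3 := hxstar (xs (n+1))
        linarith
      have hstep : P (xt (n+1)) - P xstar ≤
          ρ (n+1) * ((P (xt n) - P xstar) + γ1 / τ ^ n * Du) + γ1 / τ ^ n * Du := by
        have hmul : ρ (n+1) * (Pt (n+1) (xt n) - Pt (n+1) (xs (n+1))) ≤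
            ρ (n+1) * ((P (xt n) - P xstar) + γ1 / τ ^ n * Du) := by
          apply mul_le_mul_of_nonneg_left _ (le_of_lt hρ0)
          linarith
        linarith
      have hz : τ ^ ((2:ℤ) - ((n+1:ℕ):ℤ)) = τ / τ ^ n := by
        have he : ((2:ℤ) - ((n+1:ℕ):ℤ)) = 1 - (n:ℤ) := by push_cast; ring
        rw [he, zpow_sub₀ (ne_of_gt hτ0), zpow_one, zpow_natCast]
      have hz2 : τ ^ ((2:ℤ) - ((n:ℕ):ℤ)) = τ * τ / τ ^ n := by
        have he : ((2:ℤ) - ((n:ℕ):ℤ)) = 2 - (n:ℤ) := by push_cast; ring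
        rw [he, zpow_sub₀ (ne_of_gt hτ0), zpow_natCast]
        rw [show ((2:ℤ)) = ((2:ℕ):ℤ) by norm_num, zpow_natCast]
        ring
      rw [hz2] at ih'
      rw [hz, Finset.prod_Icc_succ_top h1]
      have hprodnn : (0:ℝ) ≤ ∏ s ∈ Finset.Icc 1 n, ρ s := by
        apply Finset.prod_nonneg
        intro i hi
        obtain ⟨hi1, hi2⟩ := Finset.mem_Icc.mp hi
        exact (hρ i hi1 (le_trans hi2 hn')).1.le
      -- multiply IH by ρ (n+1)
      have hmulIH : ρ (n+1) * (P (xt n) - P xstar) ≤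
          ρ (n+1) * ((∏ s ∈ Finset.Icc 1 n, ρ s) * (P (xt 0) - P xstar) +
            (1 + 1 / τ ^ 2) * γ1 * Du * (τ * τ / τ ^ n) / (τ - 1)) :=
        mul_le_mul_of_nonneg_left ih' hρ0.le
      -- bound ρ * K τ²/p/(τ-1) ≤ K/(p(τ-1))
      have hKnn : (0:ℝ) ≤ (1 + 1 / τ ^ 2) * γ1 * Du * (τ * τ / τ ^ n) / (τ - 1) := by
        positivity
      have hρK : ρ (n+1) * ((1 + 1 / τ ^ 2) * γ1 * Du * (τ * τ / τ ^ n) / (τ - 1)) ≤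
          (1 / τ ^ 2) * ((1 + 1 / τ ^ 2) * γ1 * Du * (τ * τ / τ ^ n) / (τ - 1)) :=
        mul_le_mul_of_nonneg_right hρ1 hKnn
      have hρg : ρ (n+1) * (γ1 / τ ^ n * Du) ≤ (1 / τ ^ 2) * (γ1 / τ ^ n * Du) :=
        mul_le_mul_of_nonneg_right hρ1 (by positivity)
      -- final arithmetic identity
      have hid : (1 / τ ^ 2) * ((1 + 1 / τ ^ 2) * γ1 * Du * (τ * τ / τ ^ n) / (τ - 1)) +
          (1 / τ ^ 2) * (γ1 / τ ^ n * Du) + γ1 / τ ^ n * Du =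
          (1 + 1 / τ ^ 2) * γ1 * Du * (τ / τ ^ n) / (τ - 1) := by
        field_simp
        ring
      nlinarith [hstep, hmulIH, hρK, hρg, hid]
  have := key S le_rfl
  simpa using this
end

section
/- (Corollary 1: Theorem 1 with non-accelerated iteration count.) Under the hypotheses of Theorem 1 (per-stage form), suppose additionally that stage s uses T_s = τ^{s−1}·T_1 iterations with T_1 > 0, and let T = Σ_{s=1}^S T_s be the total iteration count. Set q = T_1/(T_1 + (τ−1)·T), so that q = τ^{−S}. Then P(x̃_S) − P(x*) ≤ q²·(P(x̃_0) − P(x*)) + ((τ² + 1)/(τ − 1))·γ_1·D_u·q. In particular, the first term is O(1/T²) and the second is O(γ_1·D_u/T). -/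
open Finset

/-- **Corollary 1 (Theorem 1 with non-accelerated iteration count).** Under the
hypotheses of Theorem 1 (per-stage form), suppose stage `s` uses `T_s = τ^{s−1} T_1`
iterations with `T_1 > 0`, and let `T = Σ_{s=1}^S T_s`.  Set
`q = T_1/(T_1 + (τ−1) T)`, so that `q = τ^{−S}`.  Then
`P(x̃_S) − P(x*) ≤ q² (P(x̃_0) − P(x*)) + ((τ² + 1)/(τ − 1)) γ_1 D_u q`,
i.e. the first term is `O(1/T²)` and the second `O(γ_1 D_u / T)`. -/
theorem cns_strongly_convex_nonaccelerated_rate {d : ℕ}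
    (τ γ1 Du : ℝ) (hτ : 1 < τ) (hγ1 : 0 < γ1) (hDu : 0 ≤ Du)
    (S : ℕ) (hS : 1 ≤ S)
    (P : (Fin d → ℝ) → ℝ) (xstar : Fin d → ℝ) (hxstar : ∀ y, P xstar ≤ P y)
    (Pt : ℕ → (Fin d → ℝ) → ℝ) (xs : ℕ → Fin d → ℝ)
    (hsand : ∀ s, 1 ≤ s → s ≤ S → ∀ x,
      Pt s x ≤ P x ∧ P x ≤ Pt s x + γ1 / τ ^ (s - 1) * Du)
    (hmin : ∀ s, 1 ≤ s → s ≤ S → ∀ y, Pt s (xs s) ≤ Pt s y)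
    (xt : ℕ → Fin d → ℝ) (ρ : ℕ → ℝ)
    (hρ : ∀ s, 1 ≤ s → s ≤ S → ρ s ∈ Set.Ioc 0 (1 / τ ^ 2))
    (hred : ∀ s, 1 ≤ s → s ≤ S →
      Pt s (xt s) - Pt s (xs s) ≤ ρ s * (Pt s (xt (s - 1)) - Pt s (xs s)))
    (T1 : ℝ) (hT1 : 0 < T1) (Ts : ℕ → ℝ)
    (hTs : ∀ s, 1 ≤ s → s ≤ S → Ts s = τ ^ (s - 1) * T1)
    (T q : ℝ) (hT : T = ∑ s ∈ Finset.Icc 1 S, Ts s)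
    (hq : q = T1 / (T1 + (τ - 1) * T)) :
    q = (τ ^ S)⁻¹ ∧
    P (xt S) - P xstar ≤
      q ^ 2 * (P (xt 0) - P xstar) + (τ ^ 2 + 1) / (τ - 1) * γ1 * Du * q := by
  have hτ0 : (0:ℝ) < τ := lt_trans one_pos hτ
  have hτ1 : τ - 1 > 0 := by linarith
  have hτne : τ ≠ 1 := ne_of_gt hτ
  -- Step 1 : q = τ⁻ˢ
  have hTsum : T = (∑ i ∈ Finset.range S, τ ^ i) * T1 := by
    rw [hT, ← Finset.Ico_add_one_right_eq_Icc, Finset.sum_Ico_eq_sum_range, Finset.sum_mul]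
    refine Finset.sum_congr rfl fun i hi => ?_
    rw [Finset.mem_range] at hi
    rw [hTs (1 + i) (by omega) (by omega)]
    have h1 : 1 + i - 1 = i := by omega
    rw [h1]
  have hgeom : (∑ i ∈ Finset.range S, τ ^ i) = (τ ^ S - 1) / (τ - 1) :=
    geom_sum_eq hτne S
  have hden : T1 + (τ - 1) * T = τ ^ S * T1 := by
    rw [hTsum, hgeom]
    field_simp
    ring
  have hpowS : (0:ℝ) < τ ^ S := pow_pos hτ0 S
  have hqval : q = (τ ^ S)⁻¹ := by
    rw [hq, hden, div_eq_iff (by positivity)]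
    field_simp
  refine ⟨hqval, ?_⟩
  -- Step 2 : the main recursion, multiplied through by τ^(2s)
  set K : ℝ := (τ ^ 2 + 1) / (τ - 1) * γ1 * Du with hK
  have hKnn : 0 ≤ K := by
    apply mul_nonneg (mul_nonneg _ (le_of_lt hγ1)) hDu
    positivity
  have hKτ : K * (τ - 1) = (τ ^ 2 + 1) * γ1 * Du := by
    rw [hK]; field_simp
  have hE : ∀ s, 0 ≤ P (xt s) - P xstar := fun s => by linarith [hxstar (xt s)]
  have main : ∀ s, s ≤ S →
      (τ ^ s) ^ 2 * (P (xt s) - P xstar) ≤ (P (xt 0) - P xstar) + K * τ ^ s := by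
    intro s
    induction s with
    | zero =>
      intro _
      simp only [pow_zero, one_pow, one_mul, mul_one]
      linarith [hKnn]
    | succ n ih =>
      intro hle
      have hn : n ≤ S := le_trans (Nat.le_succ n) hle
      have ihn := ih hn
      have h1 : 1 ≤ n + 1 := Nat.le_add_left 1 n
      have hsub : (n + 1) - 1 = n := rfl
      have hsand' := hsand (n+1) h1 hle
      have hmin' := hmin (n+1) h1 hle
      have hρ' := hρ (n+1) h1 hle
      have hred' := hred (n+1) h1 hle
      rw [hsub] at hred'
      obtain ⟨hr0, hr2⟩ := hρ'
      set g : ℝ := γ1 / τ ^ n * Du with hg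
      set p : ℝ := τ ^ n with hp
      have hgnn : 0 ≤ g := by rw [hg]; positivity
      have hpn : (0:ℝ) < p := pow_pos hτ0 n
      set A : ℝ := P (xt (n+1)) - P xstar with hA
      set B : ℝ := P (xt n) - P xstar with hB
      set r : ℝ := ρ (n+1) with hr
      -- key per-stage inequality : A ≤ r (B + g) + g
      have hA1 : A ≤ Pt (n+1) (xt (n+1)) - Pt (n+1) (xs (n+1)) + g := by
        have h := (hsand' (xt (n+1))).2
        rw [hsub] at h
        have h2 := hmin' xstar
        have h3 := (hsand' xstar).1
        rw [hA]
        linarith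
      have hB1 : Pt (n+1) (xt n) - Pt (n+1) (xs (n+1)) ≤ B + g := by
        have h5 := (hsand' (xt n)).1
        have h6 := (hsand' (xs (n+1))).2
        rw [hsub] at h6
        have h7 := hxstar (xs (n+1))
        rw [hB]
        linarith
      have hstep : A ≤ r * (B + g) + g := by
        have := mul_le_mul_of_nonneg_left hB1 (le_of_lt hr0)
        linarith
      have hBnn : 0 ≤ B := hE n
      have hgp : g * p = γ1 * Du := by
        rw [hg, hp]; field_simp
      have hrτ : r * τ ^ 2 ≤ 1 := by
        have := mul_le_mul_of_nonneg_right hr2 (le_of_lt (by positivity : (0:ℝ) < τ ^ 2))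
        rwa [one_div, inv_mul_cancel₀ (by positivity : (τ:ℝ)^2 ≠ 0)] at this
      have hpow : (τ:ℝ) ^ (n+1) = τ * p := by rw [hp]; ring
      rw [hpow]
      have hX : 0 ≤ p ^ 2 * (B + g) := by positivity
      calc (τ * p) ^ 2 * A
          ≤ (τ * p) ^ 2 * (r * (B + g) + g) :=
            mul_le_mul_of_nonneg_left hstep (by positivity)
        _ = (r * τ ^ 2) * (p ^ 2 * (B + g)) + τ ^ 2 * p ^ 2 * g := by ring
        _ ≤ 1 * (p ^ 2 * (B + g)) + τ ^ 2 * p ^ 2 * g := by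
            have := mul_le_mul_of_nonneg_right hrτ hX
            linarith
        _ = p ^ 2 * B + (g * p) * p + τ ^ 2 * ((g * p) * p) := by ring
        _ = p ^ 2 * B + γ1 * Du * p + τ ^ 2 * (γ1 * Du * p) := by rw [hgp]
        _ ≤ ((P (xt 0) - P xstar) + K * p) + (τ ^ 2 + 1) * γ1 * Du * p := by
            linarith [ihn]
        _ = (P (xt 0) - P xstar) + K * (τ * p) := by
            linear_combination (-p) * hKτ
  -- Step 3 : conclude
  have hmS := main S le_rfl
  have hq0 : 0 < q := by rw [hqval]; positivity
  have hqτ : q * τ ^ S = 1 := by rw [hqval]; field_simp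
  have h2 : q ^ 2 * ((τ ^ S) ^ 2 * (P (xt S) - P xstar)) = P (xt S) - P xstar := by
    linear_combination (q * τ ^ S + 1) * (P (xt S) - P xstar) * hqτ
  have h3 : q ^ 2 * ((P (xt 0) - P xstar) + K * τ ^ S)
      = q ^ 2 * (P (xt 0) - P xstar) + K * q := by
    linear_combination K * q * hqτ
  have h4 := mul_le_mul_of_nonneg_left hmS (by positivity : (0:ℝ) ≤ q ^ 2)
  linarith [h4, h2, h3]
end

section
/- (Theorem 2: accelerated solvers, strongly convex case.) Under the hypotheses of Theorem 1 (per-stage form), suppose additionally that stage s uses T_s = τ^{(s−1)/2}·T_1 iterations with T_1 > 0, and let T = Σ_{s=1}^S T_s be the total iteration count. Set q = T_1/(T_1 + (√τ − 1)·T), so that q = τ^{−S/2}. Then P(x̃_S) − P(x*) ≤ q⁴·(P(x̃_0) − P(x*)) + ((τ² + 1)/(τ − 1))·γ_1·D_u·q². In particular, the first term is O(1/T⁴) and the second is O(γ_1·D_u/T²). -/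
open Finset

/-- **Theorem 2 (accelerated solvers, strongly convex case).** Under the hypotheses of
Theorem 1 (per-stage form), suppose stage `s` uses `T_s = τ^{(s−1)/2} T_1` iterations
with `T_1 > 0`, and let `T = Σ_{s=1}^S T_s`.  Set `q = T_1/(T_1 + (√τ − 1) T)`, so that
`q = τ^{−S/2}`.  Then
`P(x̃_S) − P(x*) ≤ q⁴ (P(x̃_0) − P(x*)) + ((τ² + 1)/(τ − 1)) γ_1 D_u q²`,
i.e. the first term is `O(1/T⁴)` and the second `O(γ_1 D_u / T²)`. -/
theorem cns_strongly_convex_accelerated_rate {d : ℕ}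
    (τ γ1 Du : ℝ) (hτ : 1 < τ) (hγ1 : 0 < γ1) (hDu : 0 ≤ Du)
    (S : ℕ) (hS : 1 ≤ S)
    (P : (Fin d → ℝ) → ℝ) (xstar : Fin d → ℝ) (hxstar : ∀ y, P xstar ≤ P y)
    (Pt : ℕ → (Fin d → ℝ) → ℝ) (xs : ℕ → Fin d → ℝ)
    (hsand : ∀ s, 1 ≤ s → s ≤ S → ∀ x,
      Pt s x ≤ P x ∧ P x ≤ Pt s x + γ1 / τ ^ (s - 1) * Du)
    (hmin : ∀ s, 1 ≤ s → s ≤ S → ∀ y, Pt s (xs s) ≤ Pt s y)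
    (xt : ℕ → Fin d → ℝ) (ρ : ℕ → ℝ)
    (hρ : ∀ s, 1 ≤ s → s ≤ S → ρ s ∈ Set.Ioc 0 (1 / τ ^ 2))
    (hred : ∀ s, 1 ≤ s → s ≤ S →
      Pt s (xt s) - Pt s (xs s) ≤ ρ s * (Pt s (xt (s - 1)) - Pt s (xs s)))
    (T1 : ℝ) (hT1 : 0 < T1) (Ts : ℕ → ℝ)
    (hTs : ∀ s, 1 ≤ s → s ≤ S → Ts s = Real.sqrt τ ^ (s - 1) * T1)
    (T q : ℝ) (hT : T = ∑ s ∈ Finset.Icc 1 S, Ts s)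
    (hq : q = T1 / (T1 + (Real.sqrt τ - 1) * T)) :
    q = (Real.sqrt τ ^ S)⁻¹ ∧
    P (xt S) - P xstar ≤
      q ^ 4 * (P (xt 0) - P xstar) + (τ ^ 2 + 1) / (τ - 1) * γ1 * Du * q ^ 2 := by
  have hτ0 : (0:ℝ) < τ := lt_trans one_pos hτ
  have hsτ : 1 < Real.sqrt τ := by
    have : Real.sqrt 1 < Real.sqrt τ := Real.sqrt_lt_sqrt (by norm_num) hτ
    simpa using this
  have hsτ0 : (0:ℝ) < Real.sqrt τ := lt_trans one_pos hsτ
  have hsτsq : Real.sqrt τ ^ 2 = τ := Real.sq_sqrt hτ0.le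
  -- Part 1: the value of q
  have hsum : T = T1 * ((Real.sqrt τ ^ S - 1) / (Real.sqrt τ - 1)) := by
    rw [hT]
    have hrw : ∀ s ∈ Finset.Icc 1 S, Ts s = Real.sqrt τ ^ (s - 1) * T1 := by
      intro s hs
      rw [Finset.mem_Icc] at hs
      exact hTs s hs.1 hs.2
    rw [Finset.sum_congr rfl hrw, ← Finset.Ico_add_one_right_eq_Icc, Finset.sum_Ico_eq_sum_range]
    simp only [Nat.add_sub_cancel, Nat.succ_sub_one, Nat.add_sub_cancel_left]
    rw [← Finset.sum_mul, geom_sum_eq hsτ.ne']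
    ring
  have hqval : q = (Real.sqrt τ ^ S)⁻¹ := by
    have h1 : Real.sqrt τ - 1 ≠ 0 := sub_ne_zero.2 hsτ.ne'
    have hden : T1 + (Real.sqrt τ - 1) * T = T1 * Real.sqrt τ ^ S := by
      rw [hsum]; field_simp; ring
    rw [hq, hden, mul_comm, div_mul_eq_div_div_swap, div_self hT1.ne', one_div]
  refine ⟨hqval, ?_⟩
  -- Part 2
  set Δ : ℕ → ℝ := fun s => P (xt s) - P xstar with hΔ
  have hΔnn : ∀ s, 0 ≤ Δ s := fun s => sub_nonneg.2 (hxstar _)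
  set C : ℝ := (τ ^ 2 + 1) / (τ - 1) * γ1 * Du with hC
  have hτ1 : (0:ℝ) < τ - 1 := sub_pos.2 hτ
  have hCnn : 0 ≤ C := by
    apply mul_nonneg (mul_nonneg _ hγ1.le) hDu
    positivity
  have key : ∀ s, 1 ≤ s → s ≤ S →
      Δ s ≤ τ⁻¹ ^ 2 * Δ (s - 1) + (τ⁻¹ ^ 2 + 1) * (γ1 / τ ^ (s - 1) * Du) := by
    intro s hs1 hs2
    set g : ℝ := γ1 / τ ^ (s - 1) * Du with hg
    have hgnn : 0 ≤ g := by positivity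
    have h1 : P (xt s) ≤ Pt s (xt s) + g := (hsand s hs1 hs2 (xt s)).2
    have h2 := hred s hs1 hs2
    have h3 : Pt s (xt (s - 1)) ≤ P (xt (s - 1)) := (hsand s hs1 hs2 (xt (s - 1))).1
    have h4 : Pt s (xs s) ≤ Pt s xstar := hmin s hs1 hs2 xstar
    have h5 : Pt s xstar ≤ P xstar := (hsand s hs1 hs2 xstar).1
    have h6 : P xstar ≤ Pt s (xs s) + g :=
      le_trans (hxstar (xs s)) (hsand s hs1 hs2 (xs s)).2
    obtain ⟨hρ0, hρ1⟩ := hρ s hs1 hs2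
    have hgap : Pt s (xt (s - 1)) - Pt s (xs s) ≤ Δ (s - 1) + g := by
      simp only [hΔ]; linarith
    have hgapnn : 0 ≤ Δ (s - 1) + g := add_nonneg (hΔnn _) hgnn
    have h7 : ρ s * (Pt s (xt (s - 1)) - Pt s (xs s)) ≤ (1 / τ ^ 2) * (Δ (s - 1) + g) := by
      calc ρ s * (Pt s (xt (s - 1)) - Pt s (xs s)) ≤ ρ s * (Δ (s - 1) + g) := by
            exact mul_le_mul_of_nonneg_left hgap hρ0.le
        _ ≤ (1 / τ ^ 2) * (Δ (s - 1) + g) := mul_le_mul_of_nonneg_right hρ1 hgapnn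
    have hτ2 : (1:ℝ) / τ ^ 2 = τ⁻¹ ^ 2 := by
      rw [one_div, ← inv_pow]
    simp only [hΔ]
    rw [← hτ2]
    linarith
  have ind : ∀ s, s ≤ S → Δ s ≤ ((τ ^ s)⁻¹) ^ 2 * Δ 0 + C * (τ ^ s)⁻¹ := by
    intro s
    induction s with
    | zero => intro _; simp [hCnn]
    | succ n ih =>
      intro hn
      have hnS : n ≤ S := le_trans (Nat.le_succ n) hn
      have hkey := key (n + 1) (Nat.succ_le_succ (Nat.zero_le n)) hn
      simp only [Nat.add_sub_cancel] at hkey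
      have hih := ih hnS
      have ha : (0:ℝ) < τ ^ n := pow_pos hτ0 n
      have hstep : τ⁻¹ ^ 2 * (((τ ^ n)⁻¹) ^ 2 * Δ 0 + C * (τ ^ n)⁻¹)
          + (τ⁻¹ ^ 2 + 1) * (γ1 / τ ^ n * Du)
          = ((τ ^ (n + 1))⁻¹) ^ 2 * Δ 0 + C * (τ ^ (n + 1))⁻¹ := by
        rw [hC, pow_succ]
        field_simp
        ring
      have hmono : τ⁻¹ ^ 2 * Δ (n + 1 - 1) ≤ τ⁻¹ ^ 2 * (((τ ^ n)⁻¹) ^ 2 * Δ 0 + C * (τ ^ n)⁻¹) := by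
        simp only [Nat.add_sub_cancel]
        exact mul_le_mul_of_nonneg_left hih (by positivity)
      calc Δ (n + 1) ≤ τ⁻¹ ^ 2 * Δ (n + 1 - 1) + (τ⁻¹ ^ 2 + 1) * (γ1 / τ ^ n * Du) := by
            simpa using hkey
        _ ≤ τ⁻¹ ^ 2 * (((τ ^ n)⁻¹) ^ 2 * Δ 0 + C * (τ ^ n)⁻¹)
            + (τ⁻¹ ^ 2 + 1) * (γ1 / τ ^ n * Du) := by linarith
        _ = ((τ ^ (n + 1))⁻¹) ^ 2 * Δ 0 + C * (τ ^ (n + 1))⁻¹ := hstep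
  have hfin := ind S le_rfl
  have hpow : (Real.sqrt τ ^ S) ^ 2 = τ ^ S := by
    rw [← pow_mul, mul_comm, pow_mul, hsτsq]
  have hq2 : q ^ 2 = (τ ^ S)⁻¹ := by
    rw [hqval, inv_pow, hpow]
  have hq4 : q ^ 4 = ((τ ^ S)⁻¹) ^ 2 := by
    rw [show (4:ℕ) = 2 * 2 from rfl, pow_mul, hq2]
  rw [hq4, show (τ ^ 2 + 1) / (τ - 1) * γ1 * Du * q ^ 2 = C * (τ ^ S)⁻¹ by rw [hq2, hC]]
  exact hfin
end

section
/- (Cross-stage transfer for ℓ2-regularized smoothed objectives.) Let P : ℝ^d → ℝ, and consider two consecutive stages with parameters γ ≥ γ' ≥ 0 and λ ≥ λ' ≥ 0, smoothed objectives P̃, P̃' : ℝ^d → ℝ satisfying P̃(z) ≤ P̃'(z) ≤ P(z) ≤ P̃(z) + γ·D_u for all z ∈ ℝ^d, and regularized objectives H(z) = P̃(z) + (λ/2)‖z‖₂², H'(z) = P̃'(z) + (λ'/2)‖z‖₂². Let x*_H be a global minimizer of H and x*_{H'} a global minimizer of H' with ‖x*_{H'}‖₂ ≤ R. Then for every y ∈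 ℝ^d: H'(y) − H'(x*_{H'}) ≤ (H(y) − H(x*_H)) + γ·D_u + ((λ − λ')/2)·R². -/
/-- **Cross-stage transfer for ℓ2-regularized smoothed objectives.** Consider two
consecutive stages with parameters `γ ≥ γ' ≥ 0` and `λ ≥ λ' ≥ 0`, smoothed objectives
`P̃, P̃'` satisfying `P̃(z) ≤ P̃'(z) ≤ P(z) ≤ P̃(z) + γ D_u` for all `z`, and regularized
objectives `H(z) = P̃(z) + (λ/2)‖z‖₂²`, `H'(z) = P̃'(z) + (λ'/2)‖z‖₂²`.  Let `x*_H`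
minimize `H` and `x*_{H'}` minimize `H'` with `‖x*_{H'}‖₂ ≤ R`.  Then for every `y`:
`H'(y) − H'(x*_{H'}) ≤ (H(y) − H(x*_H)) + γ D_u + ((λ − λ')/2) R²`. -/
theorem cross_stage_transfer_l2_regularized {d : ℕ}
    (γ γ' lam lam' Du R : ℝ)
    (hγ' : 0 ≤ γ') (hγ : γ' ≤ γ) (hlam' : 0 ≤ lam') (hlam : lam' ≤ lam)
    (hDu : 0 ≤ Du) (hR : 0 ≤ R)
    (P Pt Pt' : EuclideanSpace ℝ (Fin d) → ℝ)
    (hsand : ∀ z, Pt z ≤ Pt' z ∧ Pt' z ≤ P z ∧ P z ≤ Pt z + γ * Du)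
    (H H' : EuclideanSpace ℝ (Fin d) → ℝ)
    (hH : ∀ z, H z = Pt z + lam / 2 * ‖z‖ ^ 2)
    (hH' : ∀ z, H' z = Pt' z + lam' / 2 * ‖z‖ ^ 2)
    (xH xH' : EuclideanSpace ℝ (Fin d))
    (hxH : ∀ y, H xH ≤ H y) (hxH' : ∀ y, H' xH' ≤ H' y) (hxH'R : ‖xH'‖ ≤ R) :
    ∀ y : EuclideanSpace ℝ (Fin d),
      H' y - H' xH' ≤ (H y - H xH) + γ * Du + (lam - lam') / 2 * R ^ 2 := by
  intro y
  have h1 := hsand y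
  have h2 := hsand xH'
  have hmin := hxH xH'
  have hny : (0:ℝ) ≤ ‖y‖ ^ 2 := by positivity
  have hnx : ‖xH'‖ ^ 2 ≤ R ^ 2 := by
    have := norm_nonneg xH'
    nlinarith
  have hnx0 : (0:ℝ) ≤ ‖xH'‖ ^ 2 := by positivity
  rw [hH y, hH xH, hH' y, hH' xH']
  rw [hH xH, hH xH'] at hmin
  nlinarith [h1.1, h1.2.1, h1.2.2, h2.1]
end

section
/- (Theorem 3, per-stage form.) Let τ > 1, γ_1 > 0, λ_1 > 0, D_u ≥ 0, R ≥ 0, and for s = 1,…,S set γ_s = γ_1·τ^{1−s} and λ_s = λ_1·τ^{1−s}. Let P : ℝ^d → ℝ have a global minimizer x* with ‖x*‖₂ ≤ R. For each s let P̃_s : ℝ^d → ℝ satisfy P̃_s(x) ≤ P(x) ≤ P̃_s(x) + γ_s·D_u for all x and P̃_s(x) ≤ P̃_{s+1}(x) for all x and all s < S; define H_s(x) = P̃_s(x) + (λ_s/2)‖x‖₂² and let x*_s be a global minimizer of H_s with ‖x*_s‖₂ ≤ R. Let x̃_0, …, x̃_S ∈ ℝ^d and ρ_1,…,ρ_S ∈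 (0, 1/τ²] satisfy H_s(x̃_s) − H_s(x*_s) ≤ ρ_s·(H_s(x̃_{s−1}) − H_s(x*_s)) for each s. Then P(x̃_S) − P(x*) ≤ τ^{−2S}·(P(x̃_0) − P(x*) + (λ_1/2)‖x̃_0‖₂² + γ_1·D_u) + (γ_1·D_u + (λ_1/2)·R²)·τ^{2−S}/(τ − 1). -/
/-!
Let `a_s = H_s(x̃_{s−1}) − H_s(x*_s)` be the gap stage `s` starts from; by Assumption 3 and
`ρ_s ≤ 1/τ²` the stage ends with a gap at most `a_s/τ²`. Moving from `H_s` to `H_{s+1}` (or,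
after the last stage, to `P` itself) raises the gap at `x̃_s` by at most `γ_s D_u + (λ_s/2) R²`:
the sandwich and `λ_{s+1} ≤ λ_s` give `H_{s+1} ≤ H_s + γ_s D_u`, while monotonicity of the
smoothings, minimality of `x*_s` and `‖x*_{s+1}‖ ≤ R` give
`H_s(x*_s) ≤ H_{s+1}(x*_{s+1}) + (λ_s/2) R²`. Hence `a_{s+1} ≤ a_s/τ² + C τ^{1−s}` with
`C = γ_1 D_u + (λ_1/2) R²`, and unrolling this recurrence from
`a_1 ≤ P(x̃_0) − P(x*) + (λ_1/2)‖x̃_0‖² + γ_1 D_u` gives the bound.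
-/

section Regularize

variable {E : Type*} [SeminormedAddGroup E]

noncomputable def regularize (f : E → ℝ) (lam : ℝ) (x : E) : ℝ := f x + lam / 2 * ‖x‖ ^ 2

@[simp]
theorem regularize_zero (f : E → ℝ) : regularize f 0 = f := by
  funext x
  simp [regularize]

theorem regularize_gap_le_of_sandwich {P f g : E → ℝ} {γ lam lam' R : ℝ} {x x₀ y : E}
    (hgP : g x ≤ P x) (hPf : P x ≤ f x + γ) (hlam' : 0 ≤ lam') (hlam : lam' ≤ lam)
    (hx₀ : ∀ z, regularize f lam x₀ ≤ regularize f lam z) (hfg : f y ≤ g y) (hy : ‖y‖ ≤ R) :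
    regularize g lam' x - regularize g lam' y ≤
      regularize f lam x - regularize f lam x₀ + (γ + lam / 2 * R ^ 2) := by
  have hgx : regularize g lam' x ≤ regularize f lam x + γ := by
    have : lam' / 2 * ‖x‖ ^ 2 ≤ lam / 2 * ‖x‖ ^ 2 := by gcongr
    unfold regularize
    linarith
  have hfx₀ : regularize f lam x₀ ≤ regularize g lam' y + lam / 2 * R ^ 2 := by
    have : lam / 2 * ‖y‖ ^ 2 ≤ lam / 2 * R ^ 2 := by
      have := hlam'.trans hlam
      gcongr
    have : 0 ≤ lam' / 2 * ‖y‖ ^ 2 := by positivity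
    have := hx₀ y
    unfold regularize at *
    linarith
  linarith

theorem regularize_sub_le {P f : E → ℝ} {γ lam : ℝ} {x x₀ xstar : E}
    (hfP : f x ≤ P x) (hPf : P x₀ ≤ f x₀ + γ) (hxstar : ∀ y, P xstar ≤ P y) (hlam : 0 ≤ lam) :
    regularize f lam x - regularize f lam x₀ ≤ P x - P xstar + lam / 2 * ‖x‖ ^ 2 + γ := by
  have : 0 ≤ lam / 2 * ‖x₀‖ ^ 2 := by positivity
  have := hxstar x₀
  unfold regularize
  linarith

end Regularize

theorem le_of_contraction_recurrence {τ B C : ℝ} (hτ : 1 < τ) (hC : 0 ≤ C) {a : ℕ → ℝ}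
    (h₁ : a 1 ≤ B) :
    ∀ n : ℕ, (∀ s, 1 ≤ s → s ≤ n → a (s + 1) ≤ (τ ^ 2)⁻¹ * a s + C / τ ^ (s - 1)) →
      a (n + 1) ≤ (τ ^ (2 * n))⁻¹ * B + C * τ ^ ((2 : ℤ) - n) / (τ - 1)
  | 0, _ => by
    have : 0 < τ - 1 := sub_pos.2 hτ
    have : 0 ≤ C * τ ^ (2 : ℤ) / (τ - 1) := by positivity
    simp only [mul_zero, pow_zero, inv_one, one_mul, CharP.cast_eq_zero, sub_zero]
    linarith
  | n + 1, h => by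
    have hτ0 : τ ≠ 0 := by positivity
    have hτ1 : τ - 1 ≠ 0 := sub_ne_zero.2 hτ.ne'
    have ih := le_of_contraction_recurrence hτ hC h₁ n fun s h1 h2 => h s h1 (h2.trans n.le_succ)
    have hz : ∀ m : ℕ, τ ^ ((2 : ℤ) - m) = τ ^ 2 / τ ^ m := fun m => by
      rw [zpow_sub₀ hτ0, zpow_natCast, zpow_ofNat]
    calc a (n + 1 + 1)
        ≤ (τ ^ 2)⁻¹ * a (n + 1) + C / τ ^ n := h (n + 1) (Nat.le_add_left 1 n) le_rfl
      _ ≤ (τ ^ 2)⁻¹ * ((τ ^ (2 * n))⁻¹ * B + C * τ ^ ((2 : ℤ) - n) / (τ - 1)) + C / τ ^ n := by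
        gcongr
      _ = (τ ^ (2 * (n + 1)))⁻¹ * B + C * τ ^ ((2 : ℤ) - (n + 1 : ℕ)) / (τ - 1) := by
        rw [hz, hz]
        field_simp
        ring

theorem cns_general_convex_per_stage_general {d : ℕ}
    (τ γ1 lam1 Du R : ℝ) (hτ : 1 < τ) (hγ1 : 0 < γ1) (hlam1 : 0 < lam1)
    (hDu : 0 ≤ Du) (S : ℕ) (hS : 1 ≤ S)
    (P : EuclideanSpace ℝ (Fin d) → ℝ) (xstar : EuclideanSpace ℝ (Fin d))
    (hxstar : ∀ y, P xstar ≤ P y) (hxstarR : ‖xstar‖ ≤ R)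
    (Pt : ℕ → EuclideanSpace ℝ (Fin d) → ℝ)
    (hsand : ∀ s, 1 ≤ s → s ≤ S → ∀ x,
      Pt s x ≤ P x ∧ P x ≤ Pt s x + γ1 / τ ^ (s - 1) * Du)
    (hmono : ∀ s, 1 ≤ s → s < S → ∀ x, Pt s x ≤ Pt (s + 1) x)
    (H : ℕ → EuclideanSpace ℝ (Fin d) → ℝ)
    (hH : ∀ s, 1 ≤ s → s ≤ S → ∀ x,
      H s x = Pt s x + lam1 / τ ^ (s - 1) / 2 * ‖x‖ ^ 2)
    (xs : ℕ → EuclideanSpace ℝ (Fin d))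
    (hxs : ∀ s, 1 ≤ s → s ≤ S → ∀ y, H s (xs s) ≤ H s y)
    (hxsR : ∀ s, 1 ≤ s → s ≤ S → ‖xs s‖ ≤ R)
    (xt : ℕ → EuclideanSpace ℝ (Fin d)) (ρ : ℕ → ℝ)
    (hρ : ∀ s, 1 ≤ s → s ≤ S → ρ s ∈ Set.Ioc 0 (1 / τ ^ 2))
    (hred : ∀ s, 1 ≤ s → s ≤ S →
      H s (xt s) - H s (xs s) ≤ ρ s * (H s (xt (s - 1)) - H s (xs s))) :
    P (xt S) - P xstar ≤
      (τ ^ (2 * S))⁻¹ * (P (xt 0) - P xstar + lam1 / 2 * ‖xt 0‖ ^ 2 + γ1 * Du) +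
        (γ1 * Du + lam1 / 2 * R ^ 2) * τ ^ ((2 : ℤ) - (S : ℤ)) / (τ - 1) := by
  have hreg : ∀ s, 1 ≤ s → s ≤ S → H s = regularize (Pt s) (lam1 / τ ^ (s - 1)) :=
    fun s h1 h2 => funext (hH s h1 h2)
  -- `gap (S + 1)` is the suboptimality of the output on `P` itself.
  let gap : ℕ → ℝ := fun s =>
    if s ≤ S then H s (xt (s - 1)) - H s (xs s) else P (xt S) - P xstar
  have hnext : ∀ s, 1 ≤ s → s ≤ S →
      gap (s + 1) ≤ H s (xt s) - H s (xs s) + (γ1 * Du + lam1 / 2 * R ^ 2) / τ ^ (s - 1) := by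
    intro s h1 h2
    have hmin := hxs s h1 h2
    rw [hreg s h1 h2] at hmin ⊢
    rcases h2.lt_or_eq with hlt | rfl
    · simp only [gap, if_pos (Nat.succ_le_of_lt hlt), Nat.add_sub_cancel,
        hreg (s + 1) (by omega) hlt]
      refine (regularize_gap_le_of_sandwich (hsand (s + 1) (by omega) hlt _).1
        (hsand s h1 h2 _).2 (by positivity) ?_ hmin (hmono s h1 hlt _)
        (hxsR (s + 1) (by omega) hlt)).trans_eq (by ring)
      exact div_le_div_of_nonneg_left hlam1.le (by positivity)
        (pow_le_pow_right₀ hτ.le (s.sub_le 1))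
    · simp only [gap, if_neg (Nat.not_succ_le_self s)]
      have hP := regularize_gap_le_of_sandwich (g := P) (x := xt s) le_rfl (hsand s h1 h2 _).2
        le_rfl (by positivity) hmin (hsand s h1 h2 _).1 hxstarR
      rw [regularize_zero] at hP
      exact hP.trans_eq (by ring)
  have hcontract : ∀ s, 1 ≤ s → s ≤ S → H s (xt s) - H s (xs s) ≤ (τ ^ 2)⁻¹ * gap s := by
    intro s h1 h2
    simp only [gap, if_pos h2]
    calc _ ≤ ρ s * (H s (xt (s - 1)) - H s (xs s)) := hred s h1 h2
      _ ≤ _ := mul_le_mul_of_nonneg_right (by simpa using (hρ s h1 h2).2)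
        (sub_nonneg.2 (hxs s h1 h2 _))
  have hfirst : gap 1 ≤ P (xt 0) - P xstar + lam1 / 2 * ‖xt 0‖ ^ 2 + γ1 * Du := by
    simp only [gap, if_pos hS, hreg 1 le_rfl hS]
    simpa using regularize_sub_le (hsand 1 le_rfl hS _).1 (hsand 1 le_rfl hS _).2 hxstar hlam1.le
  have hfinal := le_of_contraction_recurrence hτ (C := γ1 * Du + lam1 / 2 * R ^ 2)
    (by positivity) hfirst S fun s h1 h2 => (hnext s h1 h2).trans (by linarith [hcontract s h1 h2])
  simpa [gap] using hfinal

/-- **Theorem 3 (per-stage form).** Let `τ > 1`, `γ_1, λ_1 > 0`, `D_u, R ≥ 0`, and for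
`s = 1,…,S` set `γ_s = γ_1 τ^{1−s}`, `λ_s = λ_1 τ^{1−s}`.  Let `P` have a global
minimizer `x*` with `‖x*‖₂ ≤ R`.  For each `s` let `P̃_s` satisfy
`P̃_s(x) ≤ P(x) ≤ P̃_s(x) + γ_s D_u` and `P̃_s ≤ P̃_{s+1}` pointwise (for `s < S`);
define `H_s(x) = P̃_s(x) + (λ_s/2)‖x‖₂²` with global minimizer `x*_s`, `‖x*_s‖₂ ≤ R`.
If `H_s(x̃_s) − H_s(x*_s) ≤ ρ_s (H_s(x̃_{s−1}) − H_s(x*_s))` with `ρ_s ∈ (0, 1/τ²]`,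
then `P(x̃_S) − P(x*) ≤ τ^{−2S}(P(x̃_0) − P(x*) + (λ_1/2)‖x̃_0‖₂² + γ_1 D_u)
+ (γ_1 D_u + (λ_1/2)R²) τ^{2−S}/(τ−1)`. -/
theorem cns_general_convex_per_stage {d : ℕ}
    (τ γ1 lam1 Du R : ℝ) (hτ : 1 < τ) (hγ1 : 0 < γ1) (hlam1 : 0 < lam1)
    (hDu : 0 ≤ Du) (hR : 0 ≤ R) (S : ℕ) (hS : 1 ≤ S)
    (P : EuclideanSpace ℝ (Fin d) → ℝ) (xstar : EuclideanSpace ℝ (Fin d))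
    (hxstar : ∀ y, P xstar ≤ P y) (hxstarR : ‖xstar‖ ≤ R)
    (Pt : ℕ → EuclideanSpace ℝ (Fin d) → ℝ)
    (hsand : ∀ s, 1 ≤ s → s ≤ S → ∀ x,
      Pt s x ≤ P x ∧ P x ≤ Pt s x + γ1 / τ ^ (s - 1) * Du)
    (hmono : ∀ s, 1 ≤ s → s < S → ∀ x, Pt s x ≤ Pt (s + 1) x)
    (H : ℕ → EuclideanSpace ℝ (Fin d) → ℝ)
    (hH : ∀ s, 1 ≤ s → s ≤ S → ∀ x,
      H s x = Pt s x + lam1 / τ ^ (s - 1) / 2 * ‖x‖ ^ 2)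
    (xs : ℕ → EuclideanSpace ℝ (Fin d))
    (hxs : ∀ s, 1 ≤ s → s ≤ S → ∀ y, H s (xs s) ≤ H s y)
    (hxsR : ∀ s, 1 ≤ s → s ≤ S → ‖xs s‖ ≤ R)
    (xt : ℕ → EuclideanSpace ℝ (Fin d)) (ρ : ℕ → ℝ)
    (hρ : ∀ s, 1 ≤ s → s ≤ S → ρ s ∈ Set.Ioc 0 (1 / τ ^ 2))
    (hred : ∀ s, 1 ≤ s → s ≤ S →
      H s (xt s) - H s (xs s) ≤ ρ s * (H s (xt (s - 1)) - H s (xs s))) :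
    P (xt S) - P xstar ≤
      (τ ^ (2 * S))⁻¹ * (P (xt 0) - P xstar + lam1 / 2 * ‖xt 0‖ ^ 2 + γ1 * Du) +
        (γ1 * Du + lam1 / 2 * R ^ 2) * τ ^ ((2 : ℤ) - (S : ℤ)) / (τ - 1) :=
  cns_general_convex_per_stage_general τ γ1 lam1 Du R hτ hγ1 hlam1 hDu S hS P xstar hxstar hxstarR
    Pt hsand hmono H hH xs hxs hxsR xt ρ hρ hred
end

section
/- (Theorem 3 with non-accelerated iteration count: O(1/√T) rate.) Under the hypotheses of Theorem 3 (per-stage form), suppose additionally that stage s uses T_s = τ^{2(s−1)}·T_1 iterations with T_1 > 0, and let T = Σ_{s=1}^S T_s. Set r = T_1/(T_1 + (τ² − 1)·T), so that r = τ^{−2S}. Then P(x̃_S) − P(x*) ≤ r·(P(x̃_0) − P(x*) + (λ_1/2)‖x̃_0‖₂² + γ_1·D_u) + (γ_1·D_u + (λ_1/2)·R²)·(τ²/(τ − 1))·√r. In particular, the first term is O(1/T) and the second is O((γ_1·D_u + λ_1·R²/2)/√T). -/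
/-!
Let `Δ_s = H_s(x̃_s) - H_s(x*_s)` be the gap left by stage `s`. Warm-starting stage `s + 1`
at `x̃_s` costs at most the smoothing error `γ_s D_u` plus the regularization `λ_s R² / 2`,
i.e. `B τ^{1-s}` with `B = γ_1 D_u + λ_1 R² / 2`, and the solver then contracts the gap by
`τ⁻²`. The first stage starts from a gap of at most
`E₀ = P(x̃_0) - P(x*) + λ_1‖x̃_0‖² / 2 + γ_1 D_u`, so the recurrence gives
`Δ_s ≤ τ^{-2s} E₀ + B τ^{1-s} / (τ - 1)`, and undoing smoothing
and regularization at the last stage adds `B τ^{1-S}`; the two `B`-terms sum to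
`B τ² / (τ - 1) · τ^{-S}`. Since the `T_s` form a geometric series, `τ^{-2S} = r`.
-/

open Finset

lemma div_add_sq_sub_one_mul_geom_sum_eq {τ T1 : ℝ} (hT1 : T1 ≠ 0) (S : ℕ) :
    T1 / (T1 + (τ ^ 2 - 1) * ∑ s ∈ Icc 1 S, τ ^ (2 * (s - 1)) * T1) = (τ ^ (2 * S))⁻¹ := by
  have hsum : ∑ s ∈ Icc 1 S, τ ^ (2 * (s - 1)) * T1 = (∑ i ∈ range S, (τ ^ 2) ^ i) * T1 := by
    rw [← Ico_add_one_right_eq_Icc, sum_Ico_eq_sum_range, sum_mul]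
    simp [pow_mul]
  have hden : T1 + (τ ^ 2 - 1) * ∑ s ∈ Icc 1 S, τ ^ (2 * (s - 1)) * T1 = T1 * τ ^ (2 * S) := by
    rw [hsum, ← mul_assoc, mul_comm (τ ^ 2 - 1), geom_sum_mul, pow_mul]
    ring
  rw [hden, div_mul_eq_div_div, div_self hT1, one_div]

section StageGaps

variable {X : Type*} [SeminormedAddGroup X] {P Pt Pt' H H' : X → ℝ} {γ Du lam lam' R : ℝ}

lemma initial_gap_le {x₀ xs xstar : X} (hH : ∀ y, H y = Pt y + lam / 2 * ‖y‖ ^ 2)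
    (hlam : 0 ≤ lam) (hPt : Pt x₀ ≤ P x₀) (hP : P xs ≤ Pt xs + γ * Du)
    (hxstar : P xstar ≤ P xs) :
    H x₀ - H xs ≤ P x₀ - P xstar + lam / 2 * ‖x₀‖ ^ 2 + γ * Du := by
  have : 0 ≤ lam / 2 * ‖xs‖ ^ 2 := by positivity
  rw [hH, hH]
  linarith

lemma warm_start_gap_le {x xs xs' : X} (hH : ∀ y, H y = Pt y + lam / 2 * ‖y‖ ^ 2)
    (hH' : ∀ y, H' y = Pt' y + lam' / 2 * ‖y‖ ^ 2) (hlam' : 0 ≤ lam') (hlam : lam' ≤ lam)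
    (hPt' : Pt' x ≤ P x) (hP : P x ≤ Pt x + γ * Du) (hmono : Pt xs' ≤ Pt' xs')
    (hxs : H xs ≤ H xs') (hxs'R : ‖xs'‖ ≤ R) :
    H' x - H' xs' ≤ H x - H xs + γ * Du + lam / 2 * R ^ 2 := by
  have hx : lam' / 2 * ‖x‖ ^ 2 ≤ lam / 2 * ‖x‖ ^ 2 := by gcongr
  have hxs' : lam / 2 * ‖xs'‖ ^ 2 ≤ lam / 2 * R ^ 2 := by
    have := hlam'.trans hlam
    gcongr
  have : 0 ≤ lam' / 2 * ‖xs'‖ ^ 2 := by positivity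
  simp only [hH, hH'] at hxs ⊢
  linarith

lemma objective_gap_le {x xs xstar : X} (hH : ∀ y, H y = Pt y + lam / 2 * ‖y‖ ^ 2)
    (hlam : 0 ≤ lam) (hP : P x ≤ Pt x + γ * Du) (hPt : Pt xstar ≤ P xstar)
    (hxs : H xs ≤ H xstar) (hxstarR : ‖xstar‖ ≤ R) :
    P x - P xstar ≤ H x - H xs + γ * Du + lam / 2 * R ^ 2 := by
  have hxstar : lam / 2 * ‖xstar‖ ^ 2 ≤ lam / 2 * R ^ 2 := by gcongr
  have : 0 ≤ lam / 2 * ‖x‖ ^ 2 := by positivity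
  simp only [hH] at hxs ⊢
  linarith

end StageGaps

/-- The invariant propagates because `(1 / (τ - 1) + 1) / τ = 1 / (τ - 1)`. -/
lemma gap_le_of_restarted_contraction {τ E B : ℝ} {u v : ℕ → ℝ} {m : ℕ} (hτ : 1 < τ)
    (hB : 0 ≤ B) (hv₀ : v 0 ≤ E) (hu : ∀ n ≤ m, u n ≤ 1 / τ ^ 2 * v n)
    (hv : ∀ n < m, v (n + 1) ≤ u n + B / τ ^ n) :
    ∀ n ≤ m, u n ≤ E / τ ^ (2 * (n + 1)) + B / (τ - 1) / τ ^ n := by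
  have hτ₀ : 0 < τ := by linarith
  have hτ₁ : 0 < τ - 1 := by linarith
  intro n hn
  induction n with
  | zero =>
    have : 0 ≤ B / (τ - 1) := by positivity
    calc u 0 ≤ 1 / τ ^ 2 * v 0 := hu 0 hn
      _ ≤ 1 / τ ^ 2 * E := by gcongr
      _ ≤ E / τ ^ (2 * (0 + 1)) + B / (τ - 1) / τ ^ 0 := by
        rw [zero_add, mul_one, pow_zero, div_one, one_div_mul_eq_div]; linarith
  | succ n ih =>
    calc u (n + 1) ≤ 1 / τ ^ 2 * v (n + 1) := hu (n + 1) hn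
      _ ≤ 1 / τ ^ 2 * (u n + B / τ ^ n) := by gcongr; exact hv n hn
      _ ≤ 1 / τ ^ 2 * (E / τ ^ (2 * (n + 1)) + B / (τ - 1) / τ ^ n + B / τ ^ n) := by
        gcongr; exact ih (by omega)
      _ = E / τ ^ (2 * (n + 1 + 1)) + B / (τ - 1) / τ ^ (n + 1) := by
        field_simp
        ring

theorem cns_general_convex_nonaccelerated_rate_general {d : ℕ}
    (τ γ1 lam1 Du R : ℝ) (hτ : 1 < τ) (hγ1 : 0 < γ1) (hlam1 : 0 < lam1)
    (hDu : 0 ≤ Du) (S : ℕ) (hS : 1 ≤ S)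
    (P : EuclideanSpace ℝ (Fin d) → ℝ) (xstar : EuclideanSpace ℝ (Fin d))
    (hxstar : ∀ y, P xstar ≤ P y) (hxstarR : ‖xstar‖ ≤ R)
    (Pt : ℕ → EuclideanSpace ℝ (Fin d) → ℝ)
    (hsand : ∀ s, 1 ≤ s → s ≤ S → ∀ x,
      Pt s x ≤ P x ∧ P x ≤ Pt s x + γ1 / τ ^ (s - 1) * Du)
    (hmono : ∀ s, 1 ≤ s → s < S → ∀ x, Pt s x ≤ Pt (s + 1) x)
    (H : ℕ → EuclideanSpace ℝ (Fin d) → ℝ)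
    (hH : ∀ s, 1 ≤ s → s ≤ S → ∀ x,
      H s x = Pt s x + lam1 / τ ^ (s - 1) / 2 * ‖x‖ ^ 2)
    (xs : ℕ → EuclideanSpace ℝ (Fin d))
    (hxs : ∀ s, 1 ≤ s → s ≤ S → ∀ y, H s (xs s) ≤ H s y)
    (hxsR : ∀ s, 1 ≤ s → s ≤ S → ‖xs s‖ ≤ R)
    (xt : ℕ → EuclideanSpace ℝ (Fin d)) (ρ : ℕ → ℝ)
    (hρ : ∀ s, 1 ≤ s → s ≤ S → ρ s ∈ Set.Ioc 0 (1 / τ ^ 2))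
    (hred : ∀ s, 1 ≤ s → s ≤ S →
      H s (xt s) - H s (xs s) ≤ ρ s * (H s (xt (s - 1)) - H s (xs s)))
    (T1 : ℝ) (hT1 : 0 < T1) (Ts : ℕ → ℝ)
    (hTs : ∀ s, 1 ≤ s → s ≤ S → Ts s = τ ^ (2 * (s - 1)) * T1)
    (T r : ℝ) (hT : T = ∑ s ∈ Finset.Icc 1 S, Ts s)
    (hr : r = T1 / (T1 + (τ ^ 2 - 1) * T)) :
    r = (τ ^ (2 * S))⁻¹ ∧
    P (xt S) - P xstar ≤
      r * (P (xt 0) - P xstar + lam1 / 2 * ‖xt 0‖ ^ 2 + γ1 * Du) +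
        (γ1 * Du + lam1 / 2 * R ^ 2) * (τ ^ 2 / (τ - 1)) * Real.sqrt r := by
  have hτ₀ : 0 < τ := by linarith
  have hrS : r = (τ ^ (2 * S))⁻¹ := by
    rw [hr, hT, sum_congr rfl fun s hs => hTs s (mem_Icc.1 hs).1 (mem_Icc.1 hs).2]
    exact div_add_sq_sub_one_mul_geom_sum_eq hT1.ne' S
  refine ⟨hrS, ?_⟩
  -- From here on `n` indexes stage `n + 1`, so that no truncated `s - 1` remains.
  obtain ⟨m, rfl⟩ : ∃ m, S = m + 1 := ⟨S - 1, by omega⟩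
  have hlam : ∀ n : ℕ, 0 ≤ lam1 / τ ^ n := fun n => by positivity
  have hH' : ∀ n ≤ m, ∀ x, H (n + 1) x = Pt (n + 1) x + lam1 / τ ^ n / 2 * ‖x‖ ^ 2 :=
    fun n hn => by simpa using hH (n + 1) (by omega) (by omega)
  have hsand' : ∀ n ≤ m, ∀ x, Pt (n + 1) x ≤ P x ∧ P x ≤ Pt (n + 1) x + γ1 / τ ^ n * Du :=
    fun n hn => by simpa using hsand (n + 1) (by omega) (by omega)
  set B := γ1 * Du + lam1 / 2 * R ^ 2
  have hcontract : ∀ n ≤ m, H (n + 1) (xt (n + 1)) - H (n + 1) (xs (n + 1)) ≤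
      1 / τ ^ 2 * (H (n + 1) (xt n) - H (n + 1) (xs (n + 1))) := fun n hn =>
    (hred (n + 1) (by omega) (by omega)).trans <| mul_le_mul_of_nonneg_right
      (hρ (n + 1) (by omega) (by omega)).2 (sub_nonneg.2 (hxs (n + 1) (by omega) (by omega) _))
  have hwarm : ∀ n < m, H (n + 2) (xt (n + 1)) - H (n + 2) (xs (n + 2)) ≤
      H (n + 1) (xt (n + 1)) - H (n + 1) (xs (n + 1)) + B / τ ^ n := fun n hn =>
    (warm_start_gap_le (hH' n (by omega)) (hH' (n + 1) hn) (hlam (n + 1))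
      (by gcongr; exacts [hτ.le, n.le_succ]) (hsand' (n + 1) hn _).1 (hsand' n (by omega) _).2
      (hmono (n + 1) (by omega) (by omega) _) (hxs (n + 1) (by omega) (by omega) _)
      (hxsR (n + 2) (by omega) (by omega))).trans_eq (by ring)
  have hinit := initial_gap_le (hH' 0 m.zero_le) (hlam 0) (hsand' 0 m.zero_le (xt 0)).1
    (hsand' 0 m.zero_le _).2 (hxstar (xs 1))
  simp only [pow_zero, div_one] at hinit
  have hgap := gap_le_of_restarted_contraction hτ (by positivity) hinit hcontract hwarm m le_rfl
  have hsqrt : Real.sqrt r = (τ ^ (m + 1))⁻¹ := by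
    rw [hrS, pow_mul', Real.sqrt_inv, Real.sqrt_sq (by positivity)]
  have hτ₁ : τ - 1 ≠ 0 := by linarith
  calc P (xt (m + 1)) - P xstar
      ≤ H (m + 1) (xt (m + 1)) - H (m + 1) (xs (m + 1)) + B / τ ^ m :=
        (objective_gap_le (hH' m le_rfl) (hlam m) (hsand' m le_rfl _).2 (hsand' m le_rfl _).1
          (hxs (m + 1) (by omega) le_rfl _) hxstarR).trans_eq (by ring)
    _ ≤ r * (P (xt 0) - P xstar + lam1 / 2 * ‖xt 0‖ ^ 2 + γ1 * Du) +
        B / (τ - 1) / τ ^ m + B / τ ^ m := by rw [hrS, inv_mul_eq_div]; linarith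
    _ = _ := by
      rw [hsqrt]
      field_simp
      ring

/-- **Theorem 3 with non-accelerated iteration count: `O(1/√T)` rate.** Under the
hypotheses of Theorem 3 (per-stage form), suppose stage `s` uses
`T_s = τ^{2(s−1)} T_1` iterations with `T_1 > 0`, and let `T = Σ_{s=1}^S T_s`.  Set
`r = T_1/(T_1 + (τ² − 1) T)`, so that `r = τ^{−2S}`.  Then
`P(x̃_S) − P(x*) ≤ r (P(x̃_0) − P(x*) + (λ_1/2)‖x̃_0‖₂² + γ_1 D_u)
+ (γ_1 D_u + (λ_1/2)R²)(τ²/(τ−1))√r`,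
i.e. the first term is `O(1/T)` and the second `O((γ_1 D_u + λ_1 R²/2)/√T)`. -/
theorem cns_general_convex_nonaccelerated_rate {d : ℕ}
    (τ γ1 lam1 Du R : ℝ) (hτ : 1 < τ) (hγ1 : 0 < γ1) (hlam1 : 0 < lam1)
    (hDu : 0 ≤ Du) (hR : 0 ≤ R) (S : ℕ) (hS : 1 ≤ S)
    (P : EuclideanSpace ℝ (Fin d) → ℝ) (xstar : EuclideanSpace ℝ (Fin d))
    (hxstar : ∀ y, P xstar ≤ P y) (hxstarR : ‖xstar‖ ≤ R)
    (Pt : ℕ → EuclideanSpace ℝ (Fin d) → ℝ)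
    (hsand : ∀ s, 1 ≤ s → s ≤ S → ∀ x,
      Pt s x ≤ P x ∧ P x ≤ Pt s x + γ1 / τ ^ (s - 1) * Du)
    (hmono : ∀ s, 1 ≤ s → s < S → ∀ x, Pt s x ≤ Pt (s + 1) x)
    (H : ℕ → EuclideanSpace ℝ (Fin d) → ℝ)
    (hH : ∀ s, 1 ≤ s → s ≤ S → ∀ x,
      H s x = Pt s x + lam1 / τ ^ (s - 1) / 2 * ‖x‖ ^ 2)
    (xs : ℕ → EuclideanSpace ℝ (Fin d))
    (hxs : ∀ s, 1 ≤ s → s ≤ S → ∀ y, H s (xs s) ≤ H s y)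
    (hxsR : ∀ s, 1 ≤ s → s ≤ S → ‖xs s‖ ≤ R)
    (xt : ℕ → EuclideanSpace ℝ (Fin d)) (ρ : ℕ → ℝ)
    (hρ : ∀ s, 1 ≤ s → s ≤ S → ρ s ∈ Set.Ioc 0 (1 / τ ^ 2))
    (hred : ∀ s, 1 ≤ s → s ≤ S →
      H s (xt s) - H s (xs s) ≤ ρ s * (H s (xt (s - 1)) - H s (xs s)))
    (T1 : ℝ) (hT1 : 0 < T1) (Ts : ℕ → ℝ)
    (hTs : ∀ s, 1 ≤ s → s ≤ S → Ts s = τ ^ (2 * (s - 1)) * T1)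
    (T r : ℝ) (hT : T = ∑ s ∈ Finset.Icc 1 S, Ts s)
    (hr : r = T1 / (T1 + (τ ^ 2 - 1) * T)) :
    r = (τ ^ (2 * S))⁻¹ ∧
    P (xt S) - P xstar ≤
      r * (P (xt 0) - P xstar + lam1 / 2 * ‖xt 0‖ ^ 2 + γ1 * Du) +
        (γ1 * Du + lam1 / 2 * R ^ 2) * (τ ^ 2 / (τ - 1)) * Real.sqrt r :=
  cns_general_convex_nonaccelerated_rate_general τ γ1 lam1 Du R hτ hγ1 hlam1 hDu S hS P xstar hxstar
    hxstarR Pt hsand hmono H hH xs hxs hxsR xt ρ hρ hred T1 hT1 Ts hTs T r hT hr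
end

section
/- (Theorem 3 with accelerated iteration count: O(1/T) rate.) Under the hypotheses of Theorem 3 (per-stage form), suppose additionally that stage s uses T_s = τ^{s−1}·T_1 iterations with T_1 > 0, and let T = Σ_{s=1}^S T_s. Set q = T_1/(T_1 + (τ − 1)·T), so that q = τ^{−S}. Then P(x̃_S) − P(x*) ≤ q²·(P(x̃_0) − P(x*) + (λ_1/2)‖x̃_0‖₂² + γ_1·D_u) + (γ_1·D_u + (λ_1/2)·R²)·(τ²/(τ − 1))·q. In particular, the first term is O(1/T²) and the second is O((γ_1·D_u + λ_1·R²/2)/T). -/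
open Finset

/-!
Let `Δ_s = H_s(x̃_s) − H_s(x*_s)` and `e = γ₁ D_u + λ₁ R² / 2`. Since `P̃_s ≤ P ≤ P̃_s + γ_s D_u`,
`P̃_s ≤ P̃_{s+1}` and `λ_{s+1} ≤ λ_s`, passing from `H_s` to `H_{s+1}` raises the gap of `x̃_s`
by at most `γ_s D_u + λ_s R² / 2 = e τ^{1-s}`, and the same sandwich bounds
`P(x̃_S) − P(x*)` by `Δ_S + e τ^{1-S}`. The solver contracts each gap by `1/τ²`, so
`v_s = Δ_s + e τ^{1-s}` obeys `v_{s+1} ≤ v_s / τ² + e τ^{-s}`, which unrolls to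
`v_S ≤ τ^{-2S} A + e τ² / (τ − 1) · τ^{-S}`, where `A` bounds the initial gap
`H_1(x̃_0) − H_1(x*_1)`. Finally `T` is a geometric sum, whence `q = τ^{-S}`.
-/
theorem add_sub_one_mul_sum_Icc_pow_mul {K : Type*} [CommRing K] (τ c : K) (S : ℕ) :
    c + (τ - 1) * ∑ s ∈ Icc 1 S, τ ^ (s - 1) * c = c * τ ^ S := by
  induction S with
  | zero => simp
  | succ S ih =>
    rw [sum_Icc_succ_top (Nat.le_add_left 1 S), mul_add, ← add_assoc, ih, Nat.add_sub_cancel]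
    ring

theorem le_geom_bound_of_recursion {τ e A : ℝ} (hτ : 1 < τ) (he : 0 ≤ e) {v : ℕ → ℝ} {N : ℕ}
    (hN : 1 ≤ N) (h1 : v 1 ≤ A / τ ^ 2 + e)
    (hstep : ∀ n, 1 ≤ n → n < N → v (n + 1) ≤ v n / τ ^ 2 + e / τ ^ n) :
    v N ≤ ((τ ^ N)⁻¹) ^ 2 * A + e * (τ ^ 2 / (τ - 1)) * (τ ^ N)⁻¹ := by
  have hτ1 : 0 < τ - 1 := by linarith
  induction N, hN using Nat.le_induction with
  | base =>
    have h : ((τ ^ 1)⁻¹) ^ 2 * A + e * (τ ^ 2 / (τ - 1)) * (τ ^ 1)⁻¹ =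
        A / τ ^ 2 + e + e / (τ - 1) := by
      field_simp
      ring
    rw [h]
    have : 0 ≤ e / (τ - 1) := by positivity
    linarith
  | succ N hN ih =>
    calc v (N + 1) ≤ v N / τ ^ 2 + e / τ ^ N := hstep N hN N.lt_succ_self
      _ ≤ (((τ ^ N)⁻¹) ^ 2 * A + e * (τ ^ 2 / (τ - 1)) * (τ ^ N)⁻¹) / τ ^ 2 + e / τ ^ N := by
        gcongr
        exact ih fun n hn hnN => hstep n hn (hnN.trans N.lt_succ_self)
      _ = ((τ ^ (N + 1))⁻¹) ^ 2 * A + e * (τ ^ 2 / (τ - 1)) * (τ ^ (N + 1))⁻¹ := by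
        field_simp
        ring

theorem exit_gap_le_of_continuation {τ e A : ℝ} (hτ : 1 < τ) (he : 0 ≤ e)
    {entry exit : ℕ → ℝ} {N : ℕ} (hN : 1 ≤ N) (h1 : entry 1 ≤ A)
    (hcontract : ∀ n, 1 ≤ n → n ≤ N → exit n ≤ entry n / τ ^ 2)
    (htransition : ∀ n, 1 ≤ n → n < N → entry (n + 1) ≤ exit n + e / τ ^ (n - 1)) :
    exit N + e / τ ^ (N - 1) ≤ ((τ ^ N)⁻¹) ^ 2 * A + e * (τ ^ 2 / (τ - 1)) * (τ ^ N)⁻¹ := by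
  refine le_geom_bound_of_recursion hτ he hN (v := fun n => exit n + e / τ ^ (n - 1)) ?_
    fun n hn hnN => ?_
  · simp only [Nat.sub_self, pow_zero, div_one]
    gcongr
    exact (hcontract 1 le_rfl hN).trans (by gcongr)
  · simp only [Nat.add_sub_cancel]
    gcongr
    exact (hcontract (n + 1) (Nat.le_add_left 1 n) hnN).trans
      (by gcongr; exact htransition n hn hnN)

section Smoothing

variable {E : Type*} [SeminormedAddGroup E] {P f g H H' : E → ℝ} {δ lam lam' R : ℝ}

theorem regularized_gap_le_gap_add (hlow : ∀ x, f x ≤ P x) (hupp : ∀ x, P x ≤ f x + δ)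
    (hH : ∀ x, H x = f x + lam / 2 * ‖x‖ ^ 2) (hlam : 0 ≤ lam) {xstar : E}
    (hxstar : ∀ y, P xstar ≤ P y) (x xs : E) :
    H x - H xs ≤ P x - P xstar + lam / 2 * ‖x‖ ^ 2 + δ := by
  have hxs : 0 ≤ lam / 2 * ‖xs‖ ^ 2 := by positivity
  simp only [hH]
  linarith [hlow x, hupp xs, hxstar xs]

theorem regularized_gap_le_of_continuation (hupp : ∀ x, P x ≤ f x + δ)
    (hH : ∀ x, H x = f x + lam / 2 * ‖x‖ ^ 2) (hglow : ∀ x, g x ≤ P x) (hfg : ∀ x, f x ≤ g x)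
    (hH' : ∀ x, H' x = g x + lam' / 2 * ‖x‖ ^ 2) (hlam' : 0 ≤ lam') (hlam : lam' ≤ lam)
    {xs xs' : E} (hxs : ∀ y, H xs ≤ H y) (hxs' : ‖xs'‖ ≤ R) (x : E) :
    H' x - H' xs' ≤ H x - H xs + (δ + lam / 2 * R ^ 2) := by
  have hx : lam' / 2 * ‖x‖ ^ 2 ≤ lam / 2 * ‖x‖ ^ 2 := by gcongr
  have hxs'R : lam / 2 * ‖xs'‖ ^ 2 ≤ lam / 2 * R ^ 2 := by gcongr; linarith
  have hxs'0 : 0 ≤ lam' / 2 * ‖xs'‖ ^ 2 := by positivity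
  have hmin := hxs xs'
  simp only [hH] at hmin
  simp only [hH', hH]
  linarith [hglow x, hupp x, hfg xs']

theorem gap_le_regularized_gap_add (hlow : ∀ x, f x ≤ P x) (hupp : ∀ x, P x ≤ f x + δ)
    (hH : ∀ x, H x = f x + lam / 2 * ‖x‖ ^ 2) (hlam : 0 ≤ lam) {xs xstar : E}
    (hxs : ∀ y, H xs ≤ H y) (hxstar : ‖xstar‖ ≤ R) (x : E) :
    P x - P xstar ≤ H x - H xs + (δ + lam / 2 * R ^ 2) := by
  have hx : 0 ≤ lam / 2 * ‖x‖ ^ 2 := by positivity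
  have hxstarR : lam / 2 * ‖xstar‖ ^ 2 ≤ lam / 2 * R ^ 2 := by gcongr
  have hmin := hxs xstar
  simp only [hH] at hmin
  simp only [hH]
  linarith [hupp x, hlow xstar]

end Smoothing

theorem cns_general_convex_accelerated_rate_general {d : ℕ}
    (τ γ1 lam1 Du R : ℝ) (hτ : 1 < τ) (hγ1 : 0 < γ1) (hlam1 : 0 < lam1)
    (hDu : 0 ≤ Du) (S : ℕ) (hS : 1 ≤ S)
    (P : EuclideanSpace ℝ (Fin d) → ℝ) (xstar : EuclideanSpace ℝ (Fin d))
    (hxstar : ∀ y, P xstar ≤ P y) (hxstarR : ‖xstar‖ ≤ R)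
    (Pt : ℕ → EuclideanSpace ℝ (Fin d) → ℝ)
    (hsand : ∀ s, 1 ≤ s → s ≤ S → ∀ x,
      Pt s x ≤ P x ∧ P x ≤ Pt s x + γ1 / τ ^ (s - 1) * Du)
    (hmono : ∀ s, 1 ≤ s → s < S → ∀ x, Pt s x ≤ Pt (s + 1) x)
    (H : ℕ → EuclideanSpace ℝ (Fin d) → ℝ)
    (hH : ∀ s, 1 ≤ s → s ≤ S → ∀ x,
      H s x = Pt s x + lam1 / τ ^ (s - 1) / 2 * ‖x‖ ^ 2)
    (xs : ℕ → EuclideanSpace ℝ (Fin d))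
    (hxs : ∀ s, 1 ≤ s → s ≤ S → ∀ y, H s (xs s) ≤ H s y)
    (hxsR : ∀ s, 1 ≤ s → s ≤ S → ‖xs s‖ ≤ R)
    (xt : ℕ → EuclideanSpace ℝ (Fin d)) (ρ : ℕ → ℝ)
    (hρ : ∀ s, 1 ≤ s → s ≤ S → ρ s ∈ Set.Ioc 0 (1 / τ ^ 2))
    (hred : ∀ s, 1 ≤ s → s ≤ S →
      H s (xt s) - H s (xs s) ≤ ρ s * (H s (xt (s - 1)) - H s (xs s)))
    (T1 : ℝ) (hT1 : 0 < T1) (Ts : ℕ → ℝ)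
    (hTs : ∀ s, 1 ≤ s → s ≤ S → Ts s = τ ^ (s - 1) * T1)
    (T q : ℝ) (hT : T = ∑ s ∈ Finset.Icc 1 S, Ts s)
    (hq : q = T1 / (T1 + (τ - 1) * T)) :
    q = (τ ^ S)⁻¹ ∧
    P (xt S) - P xstar ≤
      q ^ 2 * (P (xt 0) - P xstar + lam1 / 2 * ‖xt 0‖ ^ 2 + γ1 * Du) +
        (γ1 * Du + lam1 / 2 * R ^ 2) * (τ ^ 2 / (τ - 1)) * q := by
  have hq' : q = (τ ^ S)⁻¹ := by
    rw [hq, hT, sum_congr rfl fun s hs => hTs s (mem_Icc.1 hs).1 (mem_Icc.1 hs).2,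
      add_sub_one_mul_sum_Icc_pow_mul, div_mul_cancel_left₀ hT1.ne']
  refine ⟨hq', ?_⟩
  set e := γ1 * Du + lam1 / 2 * R ^ 2
  have hscale (s : ℕ) : γ1 / τ ^ s * Du + lam1 / τ ^ s / 2 * R ^ 2 = e / τ ^ s := by ring
  have hlam (s : ℕ) : 0 ≤ lam1 / τ ^ s := by positivity
  have he : 0 ≤ e := by positivity
  have final : P (xt S) - P xstar ≤ H S (xt S) - H S (xs S) + e / τ ^ (S - 1) := by
    rw [← hscale]
    exact gap_le_regularized_gap_add (hsand S hS le_rfl · |>.1) (hsand S hS le_rfl · |>.2)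
      (hH S hS le_rfl) (hlam _) (hxs S hS le_rfl) hxstarR _
  rw [hq']
  refine final.trans (exit_gap_le_of_continuation hτ he hS
    (entry := fun s => H s (xt (s - 1)) - H s (xs s)) (exit := fun s => H s (xt s) - H s (xs s))
    ?initial ?contract ?transition)
  case initial =>
    simpa using regularized_gap_le_gap_add (hsand 1 le_rfl hS · |>.1)
      (hsand 1 le_rfl hS · |>.2) (hH 1 le_rfl hS) (hlam 0) hxstar (xt 0) (xs 1)
  case contract =>
    intro s h1 h2
    rw [← one_div_mul_eq_div]
    exact (hred s h1 h2).trans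
      (mul_le_mul_of_nonneg_right (hρ s h1 h2).2 (sub_nonneg.2 (hxs s h1 h2 _)))
  case transition =>
    intro s h1 h2
    rw [← hscale]
    simpa using regularized_gap_le_of_continuation (hsand s h1 h2.le · |>.2) (hH s h1 h2.le)
      (hsand (s + 1) le_add_self h2 · |>.1) (hmono s h1 h2) (hH (s + 1) le_add_self h2)
      (hlam _) (div_le_div_of_nonneg_left hlam1.le (by positivity)
        (pow_le_pow_right₀ hτ.le (by omega))) (hxs s h1 h2.le) (hxsR (s + 1) le_add_self h2) (xt s)

/-- **Theorem 3 with accelerated iteration count: `O(1/T)` rate.** Under the hypotheses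
of Theorem 3 (per-stage form), suppose stage `s` uses `T_s = τ^{s−1} T_1` iterations
with `T_1 > 0`, and let `T = Σ_{s=1}^S T_s`.  Set `q = T_1/(T_1 + (τ − 1) T)`, so that
`q = τ^{−S}`.  Then
`P(x̃_S) − P(x*) ≤ q² (P(x̃_0) − P(x*) + (λ_1/2)‖x̃_0‖₂² + γ_1 D_u)
+ (γ_1 D_u + (λ_1/2)R²)(τ²/(τ−1)) q`,
i.e. the first term is `O(1/T²)` and the second `O((γ_1 D_u + λ_1 R²/2)/T)`. -/
theorem cns_general_convex_accelerated_rate {d : ℕ}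
    (τ γ1 lam1 Du R : ℝ) (hτ : 1 < τ) (hγ1 : 0 < γ1) (hlam1 : 0 < lam1)
    (hDu : 0 ≤ Du) (hR : 0 ≤ R) (S : ℕ) (hS : 1 ≤ S)
    (P : EuclideanSpace ℝ (Fin d) → ℝ) (xstar : EuclideanSpace ℝ (Fin d))
    (hxstar : ∀ y, P xstar ≤ P y) (hxstarR : ‖xstar‖ ≤ R)
    (Pt : ℕ → EuclideanSpace ℝ (Fin d) → ℝ)
    (hsand : ∀ s, 1 ≤ s → s ≤ S → ∀ x,
      Pt s x ≤ P x ∧ P x ≤ Pt s x + γ1 / τ ^ (s - 1) * Du)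
    (hmono : ∀ s, 1 ≤ s → s < S → ∀ x, Pt s x ≤ Pt (s + 1) x)
    (H : ℕ → EuclideanSpace ℝ (Fin d) → ℝ)
    (hH : ∀ s, 1 ≤ s → s ≤ S → ∀ x,
      H s x = Pt s x + lam1 / τ ^ (s - 1) / 2 * ‖x‖ ^ 2)
    (xs : ℕ → EuclideanSpace ℝ (Fin d))
    (hxs : ∀ s, 1 ≤ s → s ≤ S → ∀ y, H s (xs s) ≤ H s y)
    (hxsR : ∀ s, 1 ≤ s → s ≤ S → ‖xs s‖ ≤ R)
    (xt : ℕ → EuclideanSpace ℝ (Fin d)) (ρ : ℕ → ℝ)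
    (hρ : ∀ s, 1 ≤ s → s ≤ S → ρ s ∈ Set.Ioc 0 (1 / τ ^ 2))
    (hred : ∀ s, 1 ≤ s → s ≤ S →
      H s (xt s) - H s (xs s) ≤ ρ s * (H s (xt (s - 1)) - H s (xs s)))
    (T1 : ℝ) (hT1 : 0 < T1) (Ts : ℕ → ℝ)
    (hTs : ∀ s, 1 ≤ s → s ≤ S → Ts s = τ ^ (s - 1) * T1)
    (T q : ℝ) (hT : T = ∑ s ∈ Finset.Icc 1 S, Ts s)
    (hq : q = T1 / (T1 + (τ - 1) * T)) :
    q = (τ ^ S)⁻¹ ∧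
    P (xt S) - P xstar ≤
      q ^ 2 * (P (xt 0) - P xstar + lam1 / 2 * ‖xt 0‖ ^ 2 + γ1 * Du) +
        (γ1 * Du + lam1 / 2 * R ^ 2) * (τ ^ 2 / (τ - 1)) * q :=
  cns_general_convex_accelerated_rate_general τ γ1 lam1 Du R hτ hγ1 hlam1 hDu S hS P xstar hxstar
    hxstarR Pt hsand hmono H hH xs hxs hxsR xt ρ hρ hred T1 hT1 Ts hTs T q hT hq
end

section
/- (Proposition 4: no continuation, general convex case.) Let γ ≥ 0, λ ≥ 0, D_u ≥ 0, R ≥ 0, and let P, P̃ : ℝ^d → ℝ satisfy P̃(z) ≤ P(z) ≤ P̃(z) + γ·D_u for all z ∈ ℝ^d. Define H(z) = P̃(z) + (λ/2)‖z‖₂². Let x* be a global minimizer of P with ‖x*‖₂ ≤ R, and let x*_H be a global minimizer of H. Let ρ ∈ (0,1) and x̃_0 = 0, x̃_1, …, x̃_S ∈ ℝ^d satisfy H(x̃_s) − H(x*_H) ≤ ρ·(H(x̃_{s−1}) − H(x*_H)) for s = 1,…,S. Then P(x̃_S) − P(x*) ≤ ρ^S·(P(x̃_0) − P(x*)) + (1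 + ρ^S)·γ·D_u + (λ/2)·R². -/
/-- **Proposition 4 (no continuation, general convex case).** Let `γ, λ, D_u, R ≥ 0`
and `P, P̃` satisfy `P̃(z) ≤ P(z) ≤ P̃(z) + γ D_u` for all `z`.  Define
`H(z) = P̃(z) + (λ/2)‖z‖₂²`.  Let `x*` minimize `P` with `‖x*‖₂ ≤ R`, and `x*_H`
minimize `H`.  If `ρ ∈ (0,1)`, `x̃_0 = 0` and
`H(x̃_s) − H(x*_H) ≤ ρ (H(x̃_{s−1}) − H(x*_H))` for `s = 1,…,S`, then
`P(x̃_S) − P(x*) ≤ ρ^S (P(x̃_0) − P(x*)) + (1 + ρ^S) γ D_u + (λ/2) R²`. -/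
theorem cns_no_continuation_general_convex {d : ℕ}
    (γ lam Du R : ℝ) (hγ : 0 ≤ γ) (hlam : 0 ≤ lam) (hDu : 0 ≤ Du) (hR : 0 ≤ R)
    (P Pt : EuclideanSpace ℝ (Fin d) → ℝ)
    (hsand : ∀ z, Pt z ≤ P z ∧ P z ≤ Pt z + γ * Du)
    (H : EuclideanSpace ℝ (Fin d) → ℝ)
    (hH : ∀ z, H z = Pt z + lam / 2 * ‖z‖ ^ 2)
    (xstar xH : EuclideanSpace ℝ (Fin d))
    (hxstar : ∀ y, P xstar ≤ P y) (hxstarR : ‖xstar‖ ≤ R)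
    (hxH : ∀ y, H xH ≤ H y)
    (ρ : ℝ) (hρ : ρ ∈ Set.Ioo (0 : ℝ) 1) (S : ℕ)
    (xt : ℕ → EuclideanSpace ℝ (Fin d)) (hxt0 : xt 0 = 0)
    (hred : ∀ s, 1 ≤ s → s ≤ S →
      H (xt s) - H xH ≤ ρ * (H (xt (s - 1)) - H xH)) :
    P (xt S) - P xstar ≤
      ρ ^ S * (P (xt 0) - P xstar) + (1 + ρ ^ S) * γ * Du + lam / 2 * R ^ 2 := by
  obtain ⟨hρ0, hρ1⟩ := hρ
  -- geometric decay of H-gap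
  have hgeo : ∀ s, s ≤ S → H (xt s) - H xH ≤ ρ ^ s * (H (xt 0) - H xH) := by
    intro s
    induction s with
    | zero => intro _; simp
    | succ n ih =>
      intro hsS
      have h1 := hred (n + 1) (Nat.le_add_left 1 n) hsS
      simp only [Nat.add_sub_cancel] at h1
      have h2 := ih (Nat.le_of_succ_le hsS)
      calc H (xt (n + 1)) - H xH ≤ ρ * (H (xt n) - H xH) := h1
        _ ≤ ρ * (ρ ^ n * (H (xt 0) - H xH)) :=
            mul_le_mul_of_nonneg_left h2 hρ0.le
        _ = ρ ^ (n + 1) * (H (xt 0) - H xH) := by ring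
  have hS := hgeo S le_rfl
  have hρS : (0:ℝ) ≤ ρ ^ S := pow_nonneg hρ0.le S
  -- P(xt S) ≤ H(xt S) + γ Du
  have hPS : P (xt S) ≤ H (xt S) + γ * Du := by
    have := (hsand (xt S)).2
    rw [hH]
    nlinarith [sq_nonneg ‖xt S‖, mul_nonneg hlam (sq_nonneg ‖xt S‖)]
  -- H(xH) ≤ P(xstar) + lam/2 R²
  have hHxH : H xH ≤ P xstar + lam / 2 * R ^ 2 := by
    rw [hH]
    have h1 := hxH xstar
    rw [hH xH, hH xstar] at h1
    have h2 := (hsand xstar).1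
    have h3 : ‖xstar‖ ^ 2 ≤ R ^ 2 := by
      have := norm_nonneg xstar; nlinarith
    nlinarith
  -- H(xH) ≥ P(xstar) - γ Du
  have hHxHlb : P xstar - γ * Du ≤ H xH := by
    have h1 := (hsand xH).2
    have h2 := hxstar xH
    rw [hH]
    nlinarith [mul_nonneg hlam (sq_nonneg ‖xH‖)]
  -- H(xt 0) ≤ P(xt 0)
  have hH0 : H (xt 0) ≤ P (xt 0) := by
    rw [hH, hxt0]
    simpa using (hsand 0).1
  have hgap0 : H (xt 0) - H xH ≤ P (xt 0) - P xstar + γ * Du := by linarith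
  have hmul : ρ ^ S * (H (xt 0) - H xH) ≤ ρ ^ S * (P (xt 0) - P xstar + γ * Du) :=
    mul_le_mul_of_nonneg_left hgap0 hρS
  nlinarith
end
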